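/- arXiv:1404.0002 — 2 statements merged into one kernel-verified Lean document; each statement's English description precedes it below -/
import Mathlib

section
/- For all α, β ∈ ℤ^n and all f, g ∈ K[t_1,…,t_n]: (f(θ) ∘ X^{e(α)} ∘ D^{w(α)}) ∘ (g(θ) ∘ X^{e(β)} ∘ D^{w(β)}) = (f · g^{[α]} · γ_{α,β})(θ) ∘ X^{e(α+β)} ∘ D^{w(α+β)}, where g^{[α]} ∈ K[t_1,…,t_n] denotes g with each variable t_i replaced by t_i + α_i. In particular, the product of a homogeneous element of degree α and a homogeneous element of degree β is homogeneous of degree α + β, with θ-rewriting given by f · g^{[α]} · γ_{α,β}. -/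
open MvPolynomial

/-- Multiplication by the variable `x i`, as a `K`-linear endomorphism of
`K[x_1,…,x_n]`. -/
noncomputable def Xop (K : Type) [Field K] {n : ℕ} (i : Fin n) :
    Module.End K (MvPolynomial (Fin n) K) :=
  LinearMap.mulLeft K (X i)

/-- The `i`-th partial derivative, as a `K`-linear endomorphism of `K[x_1,…,x_n]`. -/
noncomputable def Dop (K : Type) [Field K] {n : ℕ} (i : Fin n) :
    Module.End K (MvPolynomial (Fin n) K) :=
  (pderiv i).toLinearMap

/-- `X^a := X_1^{a_1} ∘ ⋯ ∘ X_n^{a_n}`. -/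
noncomputable def Xpow (K : Type) [Field K] {n : ℕ} (a : Fin n → ℕ) :
    Module.End K (MvPolynomial (Fin n) K) :=
  (List.ofFn fun i => Xop K i ^ a i).prod

/-- `D^b := D_1^{b_1} ∘ ⋯ ∘ D_n^{b_n}`. -/
noncomputable def Dpow (K : Type) [Field K] {n : ℕ} (b : Fin n → ℕ) :
    Module.End K (MvPolynomial (Fin n) K) :=
  (List.ofFn fun i => Dop K i ^ b i).prod

/-- The `n`-th Weyl algebra `A_n`, realized as the `K`-subalgebra of
`End_K(K[x_1,…,x_n])` generated by `X_1,…,X_n, D_1,…,D_n`. -/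
noncomputable def WeylAlg (K : Type) [Field K] (n : ℕ) :
    Subalgebra K (Module.End K (MvPolynomial (Fin n) K)) :=
  Algebra.adjoin K (Set.range (Xop K (n := n)) ∪ Set.range (Dop K (n := n)))

/-- The `i`-th Euler operator `θ_i := X_i ∘ D_i`. -/
noncomputable def thetaOp (K : Type) [Field K] {n : ℕ} (i : Fin n) :
    Module.End K (MvPolynomial (Fin n) K) :=
  Xop K i * Dop K i

/-- Evaluation `f ↦ f(θ_1,…,θ_n)` of a polynomial `f ∈ K[t_1,…,t_n]` at the (pairwise
commuting) Euler operators. -/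
noncomputable def thetaEval (K : Type) [Field K] {n : ℕ}
    (f : MvPolynomial (Fin n) K) : Module.End K (MvPolynomial (Fin n) K) :=
  ∑ m ∈ f.support, f.coeff m • (List.ofFn fun i => thetaOp K i ^ m i).prod

/-- The `z`-th graded part `A_n^{(z)}`: the `K`-linear span of the operators
`X^a ∘ D^b` with `b − a = z` componentwise. -/
noncomputable def gradePart (K : Type) [Field K] {n : ℕ} (z : Fin n → ℤ) :
    Submodule K (Module.End K (MvPolynomial (Fin n) K)) :=
  Submodule.span K
    {F | ∃ a b : Fin n → ℕ, (∀ i, (b i : ℤ) - (a i : ℤ) = z i) ∧ F = Xpow K a * Dpow K b}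

/-- `e(z)_i := −z_i` if `z_i < 0`, and `0` otherwise. -/
def ez {n : ℕ} (z : Fin n → ℤ) : Fin n → ℕ := fun i => (-(z i)).toNat

/-- `w(z)_i := z_i` if `z_i > 0`, and `0` otherwise. -/
def wz {n : ℕ} (z : Fin n → ℤ) : Fin n → ℕ := fun i => (z i).toNat

/-- The polynomial `γ̃^{(κ)}_{a,b} ∈ K[t_1,…,t_n]` from the paper:
`1` if `a, b ≥ 0` or `a, b ≤ 0`;
`∏_{τ=0}^{|a|−1}(t_κ − τ)` if `a < 0 < b`, `|a| ≤ |b|`;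
`∏_{τ=0}^{|b|−1}(t_κ − τ − |a| + |b|)` if `a < 0 < b`, `|a| > |b|`;
`∏_{τ=1}^{a}(t_κ + τ)` if `b < 0 < a`, `|a| ≤ |b|`;
`∏_{τ=1}^{|b|}(t_κ + τ + |a| − |b|)` if `b < 0 < a`, `|a| > |b|`. -/
noncomputable def gammaT (K : Type) [Field K] {n : ℕ} (κ : Fin n) (a b : ℤ) :
    MvPolynomial (Fin n) K :=
  if (0 ≤ a ∧ 0 ≤ b) ∨ (a ≤ 0 ∧ b ≤ 0) then 1
  else if a < 0 ∧ 0 < b ∧ a.natAbs ≤ b.natAbs then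
    ∏ τ ∈ Finset.range a.natAbs, (X κ - (τ : MvPolynomial (Fin n) K))
  else if a < 0 ∧ 0 < b then
    ∏ τ ∈ Finset.range b.natAbs,
      (X κ - (τ : MvPolynomial (Fin n) K)
        - (a.natAbs : MvPolynomial (Fin n) K) + (b.natAbs : MvPolynomial (Fin n) K))
  else if 0 < a ∧ b < 0 ∧ a.natAbs ≤ b.natAbs then
    ∏ τ ∈ Finset.range a.natAbs, (X κ + ((τ : MvPolynomial (Fin n) K) + 1))
  else
    ∏ τ ∈ Finset.range b.natAbs,
      (X κ + ((τ : MvPolynomial (Fin n) K) + 1)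
        + (a.natAbs : MvPolynomial (Fin n) K) - (b.natAbs : MvPolynomial (Fin n) K))

/-- `γ_{α,β} := ∏_{κ=1}^{n} γ̃^{(κ)}_{α_κ,β_κ}`. -/
noncomputable def gammaPoly (K : Type) [Field K] {n : ℕ} (α β : Fin n → ℤ) :
    MvPolynomial (Fin n) K :=
  ∏ κ : Fin n, gammaT K κ (α κ) (β κ)

/-- `g^{[α]}`: the polynomial `g` with each variable `t_i` replaced by `t_i + α_i`. -/
noncomputable def shiftPoly (K : Type) [Field K] {n : ℕ} (α : Fin n → ℤ)
    (g : MvPolynomial (Fin n) K) : MvPolynomial (Fin n) K :=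
  MvPolynomial.aeval (fun i => X i + MvPolynomial.C ((α i : K))) g

/-!
Every operator in sight maps a monomial to a scalar multiple of a monomial: `f(θ)` multiplies
`x^m` by `f(m)`, and `X^{e(z)} D^{w(z)}` sends `x^m` to `(∏ᵢ m_i^{\underline{w(z)_i}}) x^{m - z}`
(falling factorials; the coefficient vanishes unless `m ≥ w(z)`). Comparing both sides on monomials
gives the commutation rule `X^{e(α)} D^{w(α)} g(θ) = g^{[α]}(θ) X^{e(α)} D^{w(α)}`, because
`(m - α) + α = m`, and the product rule
`X^{e(α)} D^{w(α)} X^{e(β)} D^{w(β)} = γ_{α,β}(θ) X^{e(α+β)} D^{w(α+β)}`, which splits over the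
coordinates into an identity between falling factorials whose sign cases are the cases defining
`γ̃`. The theorem follows from these two rules since `f ↦ f(θ)` is multiplicative.
-/

open Finset

lemma Nat.cast_descFactorial_eq_prod_range {R : Type*} [CommRing R] (u k : ℕ) :
    (u.descFactorial k : R) = ∏ j ∈ range k, ((u : R) - j) := by
  rw [← descPochhammer_eval_eq_descFactorial, descPochhammer_eval_eq_prod_range]

lemma Nat.cast_add_descFactorial_eq_prod_range {R : Type*} [CommRing R] (u k : ℕ) :
    ((u + k).descFactorial k : R) = ∏ j ∈ range k, ((u : R) + (j + 1)) := by
  rw [Nat.add_descFactorial_eq_ascFactorial, Nat.ascFactorial_eq_prod_range]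
  push_cast
  exact prod_congr rfl fun j _ => by ring

lemma le_of_prod_descFactorial_ne_zero {ι R : Type*} [Fintype ι] [CommSemiring R]
    {s k : ι → ℕ} (h : ∏ i, ((s i).descFactorial (k i) : R) ≠ 0) (i : ι) : k i ≤ s i := by
  by_contra hlt
  exact h (prod_eq_zero (mem_univ i)
    (by rw [Nat.descFactorial_eq_zero_iff_lt.mpr (by omega), Nat.cast_zero]))

lemma MvPolynomial.monomial_eq_monomial_of_ne_zero {σ R : Type*} [CommSemiring R]
    {m m' : σ →₀ ℕ} {c c' : R} (hc : c = c') (hm : c ≠ 0 → m = m') :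
    monomial m c = monomial m' c' := by
  subst hc
  by_cases h : c = 0
  · simp [h]
  · rw [hm h]

section WeylOperators

variable (K : Type) [Field K] {n : ℕ}

lemma Xop_monomial (i : Fin n) (m : Fin n →₀ ℕ) (c : K) :
    Xop K i (monomial m c) = monomial (m + Finsupp.single i 1) c := by
  rw [Xop, LinearMap.mulLeft_apply, X, monomial_mul, one_mul, add_comm]

lemma Dop_monomial (i : Fin n) (m : Fin n →₀ ℕ) (c : K) :
    Dop K i (monomial m c) = monomial (m - Finsupp.single i 1) (c * m i) :=
  pderiv_monomial

lemma Xpow_eq_mulLeft (a : Fin n → ℕ) :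
    Xpow K a = LinearMap.mulLeft K (monomial (Finsupp.equivFunOnFinite.symm a) 1) := by
  have hmon : monomial (Finsupp.equivFunOnFinite.symm a) (1 : K)
      = (List.ofFn fun i => X i ^ a i).prod := by
    rw [List.prod_ofFn, monomial_eq, Finsupp.prod_fintype _ _ (fun _ => pow_zero _)]
    simp
  change _ = Algebra.lmul K _ _
  rw [hmon, map_list_prod, List.map_ofFn, Xpow]
  congr 2
  funext i
  simp [Xop, LinearMap.pow_mulLeft]
  rfl

lemma Xpow_monomial (a : Fin n → ℕ) (m : Fin n →₀ ℕ) (c : K) :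
    Xpow K a (monomial m c) = monomial (m + Finsupp.equivFunOnFinite.symm a) c := by
  rw [Xpow_eq_mulLeft, LinearMap.mulLeft_apply, monomial_mul, one_mul, add_comm]

lemma Dop_pow_monomial (i : Fin n) (k : ℕ) (m : Fin n →₀ ℕ) (c : K) :
    (Dop K i ^ k) (monomial m c)
      = monomial (m - Finsupp.single i k) ((m i).descFactorial k * c) := by
  induction k generalizing m c with
  | zero => simp
  | succ k ih =>
    rw [pow_succ, Module.End.mul_apply, Dop_monomial, ih, tsub_tsub, ← Finsupp.single_add,
      Finsupp.tsub_apply, Finsupp.single_eq_same, add_comm 1 k]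
    congr 1
    cases m i with
    | zero => simp
    | succ j =>
      rw [Nat.succ_descFactorial_succ, Nat.add_sub_cancel]
      push_cast
      ring

lemma list_prod_Dop_pow_monomial (b : Fin n → ℕ) {l : List (Fin n)} (hl : l.Nodup)
    (m : Fin n →₀ ℕ) (c : K) :
    (l.map fun i => Dop K i ^ b i).prod (monomial m c)
      = monomial (m - Finsupp.equivFunOnFinite.symm fun j => if j ∈ l then b j else 0)
          ((l.map fun i => ((m i).descFactorial (b i) : K)).prod * c) := by
  induction l generalizing m c with
  | nil =>
    simp only [List.map_nil, List.prod_nil, List.not_mem_nil, if_false, one_mul]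
    rw [show (Finsupp.equivFunOnFinite.symm fun _ => 0 : Fin n →₀ ℕ) = 0 from by ext; simp,
      tsub_zero]
    rfl
  | cons i t ih =>
    obtain ⟨hit, ht⟩ := List.nodup_cons.mp hl
    rw [List.map_cons, List.prod_cons, Module.End.mul_apply, ih ht, Dop_pow_monomial,
      List.map_cons, List.prod_cons, mul_assoc]
    congr 2
    · ext j
      by_cases hj : j = i
      · subst hj; simp [hit]
      · simp [hj]
    · simp [hit]

lemma Dpow_monomial (b : Fin n → ℕ) (m : Fin n →₀ ℕ) (c : K) :
    Dpow K b (monomial m c)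
      = monomial (m - Finsupp.equivFunOnFinite.symm b)
          ((∏ i, ((m i).descFactorial (b i) : K)) * c) := by
  rw [Dpow, List.ofFn_eq_map, list_prod_Dop_pow_monomial K b (List.nodup_finRange n),
    ← List.ofFn_eq_map, List.prod_ofFn]
  simp

lemma thetaOp_monomial (i : Fin n) (m : Fin n →₀ ℕ) (c : K) :
    thetaOp K i (monomial m c) = monomial m (m i * c) := by
  rw [thetaOp, Module.End.mul_apply, Dop_monomial, Xop_monomial]
  refine monomial_eq_monomial_of_ne_zero (mul_comm _ _) fun h => ?_
  have hm : m i ≠ 0 := by rintro hm; simp [hm] at h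
  ext j
  by_cases hj : j = i
  · subst hj; simp; omega
  · simp [Ne.symm hj]

lemma thetaOp_pow_monomial (i : Fin n) (k : ℕ) (m : Fin n →₀ ℕ) (c : K) :
    (thetaOp K i ^ k) (monomial m c) = monomial m ((m i : K) ^ k * c) := by
  induction k generalizing c with
  | zero => simp
  | succ k ih =>
    rw [pow_succ, Module.End.mul_apply, thetaOp_monomial, ih, pow_succ, mul_assoc]

lemma list_prod_thetaOp_pow_monomial (d : Fin n → ℕ) (l : List (Fin n))
    (m : Fin n →₀ ℕ) (c : K) :
    (l.map fun i => thetaOp K i ^ d i).prod (monomial m c)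
      = monomial m ((l.map fun i => (m i : K) ^ d i).prod * c) := by
  induction l generalizing c with
  | nil => simp
  | cons i t ih =>
    rw [List.map_cons, List.prod_cons, Module.End.mul_apply, ih, thetaOp_pow_monomial,
      List.map_cons, List.prod_cons, mul_assoc]

lemma thetaEval_monomial (f : MvPolynomial (Fin n) K) (m : Fin n →₀ ℕ) (c : K) :
    thetaEval K f (monomial m c) = monomial m (eval (fun i => (m i : K)) f * c) := by
  have hterm : ∀ d : Fin n →₀ ℕ, (List.ofFn fun i => thetaOp K i ^ d i).prod (monomial m c)
      = monomial m ((∏ i, (m i : K) ^ d i) * c) := fun d => by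
    rw [List.ofFn_eq_map, list_prod_thetaOp_pow_monomial, ← List.ofFn_eq_map, List.prod_ofFn]
  simp only [thetaEval, LinearMap.sum_apply, LinearMap.smul_apply, hterm, smul_monomial,
    smul_eq_mul, ← map_sum, eval_eq', Finset.sum_mul, mul_assoc]

lemma thetaEval_mul (f g : MvPolynomial (Fin n) K) :
    thetaEval K (f * g) = thetaEval K f * thetaEval K g := by
  refine linearMap_ext fun m => LinearMap.ext fun c => ?_
  simp only [LinearMap.comp_apply, Module.End.mul_apply, thetaEval_monomial, map_mul, mul_assoc]

lemma eval_shiftPoly (α : Fin n → ℤ) (g : MvPolynomial (Fin n) K) (p : Fin n → K) :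
    eval p (shiftPoly K α g) = eval (fun i => p i + α i) g := by
  rw [shiftPoly, aeval_eq_bind₁]
  exact (eval₂Hom_bind₁ (RingHom.id K) p _ g).trans (by congr; simp)

lemma descFactorial_mul_descFactorial_eq_eval_gammaT_of_neg_of_pos (κ : Fin n) {a b : ℤ}
    (ha : a < 0) (hb : 0 < b) (s : ℕ) {p : Fin n → K}
    (hp : p κ = (s - (a + b).toNat + (-(a + b)).toNat : ℕ)) :
    ((s.descFactorial b.toNat * (s - b.toNat + (-b).toNat).descFactorial a.toNat : ℕ) : K)
      = (s.descFactorial (a + b).toNat : K) * eval p (gammaT K κ a b) := by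
  obtain hle | hlt := le_or_gt a.natAbs b.natAbs
  · rw [gammaT, if_neg (by omega), if_pos ⟨ha, hb, hle⟩, map_prod]
    rw [show (a + b).toNat = b.natAbs - a.natAbs by omega, show (-(a + b)).toNat = 0 by omega,
      add_zero] at hp
    have heval : ∏ τ ∈ range a.natAbs, eval p (X κ - (τ : MvPolynomial (Fin n) K))
        = ((s - (b.natAbs - a.natAbs)).descFactorial a.natAbs : K) := by
      rw [Nat.cast_descFactorial_eq_prod_range]
      exact prod_congr rfl fun τ _ => by simp [hp]
    have hsplit := Nat.descFactorial_mul_descFactorial (n := s) (Nat.sub_le b.natAbs a.natAbs)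
    rw [show b.natAbs - (b.natAbs - a.natAbs) = a.natAbs by omega] at hsplit
    rw [heval, show a.toNat = 0 by omega, show (a + b).toNat = b.natAbs - a.natAbs by omega,
      show b.toNat = b.natAbs by omega, ← hsplit, Nat.descFactorial_zero, mul_one, Nat.cast_mul,
      mul_comm]
  · rw [gammaT, if_neg (by omega), if_neg (by omega), if_pos ⟨ha, hb⟩, map_prod]
    rw [show (a + b).toNat = 0 by omega, show (-(a + b)).toNat = a.natAbs - b.natAbs by omega,
      Nat.sub_zero] at hp
    have heval : ∏ τ ∈ range b.natAbs, eval p (X κ - (τ : MvPolynomial (Fin n) K)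
          - (a.natAbs : MvPolynomial (Fin n) K) + (b.natAbs : MvPolynomial (Fin n) K))
        = (s.descFactorial b.natAbs : K) := by
      rw [Nat.cast_descFactorial_eq_prod_range]
      refine prod_congr rfl fun τ _ => ?_
      simp only [map_add, map_sub, eval_X, map_natCast, hp]
      push_cast [Nat.cast_sub hlt.le]
      ring
    rw [heval, show a.toNat = 0 by omega, show (a + b).toNat = 0 by omega,
      show b.toNat = b.natAbs by omega]
    simp

lemma descFactorial_mul_descFactorial_eq_eval_gammaT_of_pos_of_neg (κ : Fin n) {a b : ℤ}
    (ha : 0 < a) (hb : b < 0) (s : ℕ) {p : Fin n → K}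
    (hp : p κ = (s - (a + b).toNat + (-(a + b)).toNat : ℕ)) :
    ((s.descFactorial b.toNat * (s - b.toNat + (-b).toNat).descFactorial a.toNat : ℕ) : K)
      = (s.descFactorial (a + b).toNat : K) * eval p (gammaT K κ a b) := by
  obtain hle | hlt := le_or_gt a.natAbs b.natAbs
  · rw [gammaT, if_neg (by omega), if_neg (by omega), if_neg (by omega), if_pos ⟨ha, hb, hle⟩,
      map_prod]
    rw [show (a + b).toNat = 0 by omega, show (-(a + b)).toNat = b.natAbs - a.natAbs by omega,
      Nat.sub_zero] at hp
    have heval : ∏ τ ∈ range a.natAbs, eval p (X κ + ((τ : MvPolynomial (Fin n) K) + 1))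
        = ((s + (b.natAbs - a.natAbs) + a.natAbs).descFactorial a.natAbs : K) := by
      rw [Nat.cast_add_descFactorial_eq_prod_range]
      exact prod_congr rfl fun τ _ => by simp [hp]
    rw [heval, show a.toNat = a.natAbs by omega, show (a + b).toNat = 0 by omega,
      show b.toNat = 0 by omega, show (-b).toNat = b.natAbs by omega,
      show s - 0 + b.natAbs = s + (b.natAbs - a.natAbs) + a.natAbs by omega]
    simp
  · rw [gammaT, if_neg (by omega), if_neg (by omega), if_neg (by omega), if_neg (by omega),
      map_prod]
    rw [show (a + b).toNat = a.natAbs - b.natAbs by omega, show (-(a + b)).toNat = 0 by omega,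
      add_zero] at hp
    rw [show a.toNat = a.natAbs by omega, show (a + b).toNat = a.natAbs - b.natAbs by omega,
      show b.toNat = 0 by omega, show (-b).toNat = b.natAbs by omega, Nat.descFactorial_zero,
      one_mul, Nat.sub_zero]
    obtain hs | hs := le_or_gt (a.natAbs - b.natAbs) s
    · have heval : ∏ τ ∈ range b.natAbs, eval p (X κ + ((τ : MvPolynomial (Fin n) K) + 1)
            + (a.natAbs : MvPolynomial (Fin n) K) - (b.natAbs : MvPolynomial (Fin n) K))
          = ((s + b.natAbs).descFactorial b.natAbs : K) := by
        rw [Nat.cast_add_descFactorial_eq_prod_range]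
        refine prod_congr rfl fun τ _ => ?_
        simp only [map_add, map_sub, map_one, eval_X, map_natCast, hp]
        push_cast [Nat.cast_sub hs, Nat.cast_sub hlt.le]
        ring
      have hsplit := Nat.descFactorial_mul_descFactorial (n := s + b.natAbs) hlt.le
      rw [Nat.add_sub_cancel] at hsplit
      rw [heval, ← hsplit]
      push_cast
      ring
    · rw [Nat.descFactorial_eq_zero_iff_lt.mpr hs, Nat.descFactorial_eq_zero_iff_lt.mpr (by omega)]
      simp

/-- On `x^s` (in the variable `κ`), `X^{e(b)} D^{w(b)}` followed by `X^{e(a)} D^{w(a)}` multiplies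
by the left-hand side, while `X^{e(a+b)} D^{w(a+b)}` multiplies by `s^{\underline{w(a+b)}}` and
lands on the exponent `p κ`, where `γ̃(θ)` then acts. -/
lemma descFactorial_mul_descFactorial_eq_eval_gammaT (κ : Fin n) (a b : ℤ) (s : ℕ)
    {p : Fin n → K} (hp : p κ = (s - (a + b).toNat + (-(a + b)).toNat : ℕ)) :
    ((s.descFactorial b.toNat * (s - b.toNat + (-b).toNat).descFactorial a.toNat : ℕ) : K)
      = (s.descFactorial (a + b).toNat : K) * eval p (gammaT K κ a b) := by
  by_cases hsign : (0 ≤ a ∧ 0 ≤ b) ∨ (a ≤ 0 ∧ b ≤ 0)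
  · rw [gammaT, if_pos hsign, map_one, mul_one]
    rcases hsign with ⟨ha, hb⟩ | ⟨ha, hb⟩
    · rw [← Nat.descFactorial_mul_descFactorial (show b.toNat ≤ (a + b).toNat by omega),
        show (-b).toNat = 0 by omega, show (a + b).toNat - b.toNat = a.toNat by omega,
        add_zero, mul_comm]
    · simp [show a.toNat = 0 by omega, show b.toNat = 0 by omega,
        show (a + b).toNat = 0 by omega]
  obtain ⟨ha, hb⟩ | ⟨ha, hb⟩ : (a < 0 ∧ 0 < b) ∨ (0 < a ∧ b < 0) := by omega
  · exact descFactorial_mul_descFactorial_eq_eval_gammaT_of_neg_of_pos K κ ha hb s hp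
  · exact descFactorial_mul_descFactorial_eq_eval_gammaT_of_pos_of_neg K κ ha hb s hp

noncomputable def XDpow (z : Fin n → ℤ) : Module.End K (MvPolynomial (Fin n) K) :=
  Xpow K (ez z) * Dpow K (wz z)

lemma XDpow_monomial (z : Fin n → ℤ) (m : Fin n →₀ ℕ) (c : K) :
    XDpow K z (monomial m c)
      = monomial (Finsupp.equivFunOnFinite.symm fun i => m i - (z i).toNat + (-z i).toNat)
          ((∏ i, ((m i).descFactorial (z i).toNat : K)) * c) := by
  rw [XDpow, Module.End.mul_apply, Dpow_monomial, Xpow_monomial]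
  congr 2
  ext i
  simp [ez, wz]

lemma XDpow_mul_thetaEval (α : Fin n → ℤ) (g : MvPolynomial (Fin n) K) :
    XDpow K α * thetaEval K g = thetaEval K (shiftPoly K α g) * XDpow K α := by
  refine linearMap_ext fun m => LinearMap.ext fun c => ?_
  simp only [LinearMap.comp_apply, Module.End.mul_apply (XDpow K α),
    Module.End.mul_apply (thetaEval K _), thetaEval_monomial, XDpow_monomial, eval_shiftPoly,
    Finsupp.coe_equivFunOnFinite_symm]
  congr 1
  by_cases hP : ∏ i, ((m i).descFactorial (α i).toNat : K) = 0
  · simp [hP]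
  have hshift : (fun i => ((m i - (α i).toNat + (-α i).toNat : ℕ) : K) + α i)
      = fun i => (m i : K) := funext fun i => by
    have hle := le_of_prod_descFactorial_ne_zero hP i
    have hz : ((m i - (α i).toNat + (-α i).toNat : ℕ) : ℤ) + α i = m i := by omega
    exact_mod_cast congrArg (Int.cast : ℤ → K) hz
  rw [hshift]
  ring

lemma XDpow_mul_XDpow (α β : Fin n → ℤ) :
    XDpow K α * XDpow K β = thetaEval K (gammaPoly K α β) * XDpow K (α + β) := by
  refine linearMap_ext fun m => LinearMap.ext fun c => ?_
  rw [LinearMap.comp_apply, LinearMap.comp_apply, Module.End.mul_apply (XDpow K α),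
    Module.End.mul_apply (thetaEval K _), XDpow_monomial, XDpow_monomial, XDpow_monomial,
    thetaEval_monomial]
  simp only [Finsupp.coe_equivFunOnFinite_symm, Pi.add_apply, ← mul_assoc]
  refine monomial_eq_monomial_of_ne_zero ?_ fun h => ?_
  · rw [gammaPoly, map_prod, ← prod_mul_distrib, ← prod_mul_distrib]
    congr 1
    refine prod_congr rfl fun i _ => ?_
    rw [mul_comm, ← Nat.cast_mul, mul_comm (eval _ _)]
    exact descFactorial_mul_descFactorial_eq_eval_gammaT K i _ _ _ rfl
  · have hβ := le_of_prod_descFactorial_ne_zero (right_ne_zero_of_mul (left_ne_zero_of_mul h))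
    have hα := le_of_prod_descFactorial_ne_zero (left_ne_zero_of_mul (left_ne_zero_of_mul h))
    ext i
    have hαi := hα i
    have hβi := hβ i
    simp only [Finsupp.coe_equivFunOnFinite_symm]
    omega

end WeylOperators

theorem homogeneous_product_formula_general (K : Type) [Field K]
    (n : ℕ) (α β : Fin n → ℤ) (f g : MvPolynomial (Fin n) K) :
    (thetaEval K f * (Xpow K (ez α) * Dpow K (wz α)))
        * (thetaEval K g * (Xpow K (ez β) * Dpow K (wz β)))
      = thetaEval K (f * shiftPoly K α g * gammaPoly K α β)
          * (Xpow K (ez (α + β)) * Dpow K (wz (α + β))) := by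
  change thetaEval K f * XDpow K α * (thetaEval K g * XDpow K β)
    = thetaEval K (f * shiftPoly K α g * gammaPoly K α β) * XDpow K (α + β)
  rw [mul_assoc, ← mul_assoc (XDpow K α), XDpow_mul_thetaEval, mul_assoc, XDpow_mul_XDpow,
    thetaEval_mul, thetaEval_mul]
  simp only [mul_assoc]

/-- For all `α, β ∈ ℤ^n` and `f, g ∈ K[t_1,…,t_n]`:
`(f(θ) ∘ X^{e(α)} ∘ D^{w(α)}) ∘ (g(θ) ∘ X^{e(β)} ∘ D^{w(β)})
  = (f · g^{[α]} · γ_{α,β})(θ) ∘ X^{e(α+β)} ∘ D^{w(α+β)}`. -/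
theorem homogeneous_product_formula (K : Type) [Field K] [CharZero K]
    (n : ℕ) (hn : 0 < n) (α β : Fin n → ℤ) (f g : MvPolynomial (Fin n) K) :
    (thetaEval K f * (Xpow K (ez α) * Dpow K (wz α)))
        * (thetaEval K g * (Xpow K (ez β) * Dpow K (wz β)))
      = thetaEval K (f * shiftPoly K α g * gammaPoly K α β)
          * (Xpow K (ez (α + β)) * Dpow K (wz (α + β))) :=
  homogeneous_product_formula_general K n α β f g
end

section
/- In the endomorphism algebra of K[x_1,…,x_n] (char K = 0), the operators θ_i := X_i ∘ D_i and D_j satisfy the defining relations of the n-th shift algebra: D_i ∘ θ_i = (θ_i + 1) ∘ D_i for all i, D_i ∘ θ_j = θ_j ∘ D_i for i ≠ j, and all θ's commute pairwise and all D's commute pairwise; moreover the family {θ^a ∘ D^b : a, b ∈ ℕ^n} (where θ^a := θ_1^{a_1}∘⋯∘θ_n^{a_n}) is linearly independent over K. Consequently the assignment x_i ↦ θ_i, s_i ↦ D_i realizes the n-th shift algebra as a K-subalgebra of the n-th Weyl algebra A_n, i.e. this map is an injective K-algebra homomorphism. -/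
open MvPolynomial

/-- `θ^a := θ_1^{a_1} ∘ ⋯ ∘ θ_n^{a_n}`. -/
noncomputable def Tpow (K : Type) [Field K] {n : ℕ} (a : Fin n → ℕ) :
    Module.End K (MvPolynomial (Fin n) K) :=
  (List.ofFn fun i => thetaOp K i ^ a i).prod

/-- The defining relations of the `n`-th shift algebra on the free algebra on
generators `x_1,…,x_n` (encoded `Sum.inl i`) and `s_1,…,s_n` (encoded `Sum.inr i`):
all `x`'s commute, all `s`'s commute, `s_i x_j = x_j s_i` for `i ≠ j`, and
`s_i x_i = (x_i + 1) s_i`. -/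
inductive ShiftRel (K : Type) [Field K] (n : ℕ) :
    FreeAlgebra K (Fin n ⊕ Fin n) → FreeAlgebra K (Fin n ⊕ Fin n) → Prop
  | xx (i j : Fin n) : ShiftRel K n
      (FreeAlgebra.ι K (Sum.inl i) * FreeAlgebra.ι K (Sum.inl j))
      (FreeAlgebra.ι K (Sum.inl j) * FreeAlgebra.ι K (Sum.inl i))
  | ss (i j : Fin n) : ShiftRel K n
      (FreeAlgebra.ι K (Sum.inr i) * FreeAlgebra.ι K (Sum.inr j))
      (FreeAlgebra.ι K (Sum.inr j) * FreeAlgebra.ι K (Sum.inr i))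
  | sx (i j : Fin n) (h : i ≠ j) : ShiftRel K n
      (FreeAlgebra.ι K (Sum.inr i) * FreeAlgebra.ι K (Sum.inl j))
      (FreeAlgebra.ι K (Sum.inl j) * FreeAlgebra.ι K (Sum.inr i))
  | shift (i : Fin n) : ShiftRel K n
      (FreeAlgebra.ι K (Sum.inr i) * FreeAlgebra.ι K (Sum.inl i))
      ((FreeAlgebra.ι K (Sum.inl i) + 1) * FreeAlgebra.ι K (Sum.inr i))

/-- The `n`-th shift algebra, presented by generators and relations. -/
noncomputable abbrev ShiftAlg (K : Type) [Field K] (n : ℕ) := RingQuot (ShiftRel K n)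

/-! The relations are direct computations with the Leibniz rule. For independence: the monomials
`x^m` are joint eigenvectors of the `θ_i`, and `D^b` lowers exponents by `b`. Hence the
coefficient of `x^m` in `F (x^(m+b))`, divided by `∏ᵢ (mᵢ+1)⋯(mᵢ+bᵢ)`, sends `θ^a D^b` to the
function that is `m ↦ m^a` in slot `b` and zero elsewhere; these are independent because a
polynomial vanishing on `ℕⁿ` is zero in characteristic zero. Injectivity of `x_i ↦ θ_i`,
`s_i ↦ D_i` follows because the ordered monomials `x^a s^b` span the shift algebra, as
`s_i f(x) = f(x + eᵢ) s_i` lets every `s_i` move to the right. -/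

section MultiPow

variable {M : Type*} [Monoid M] {n : ℕ}

def multiPow (g : Fin n → M) (a : Fin n → ℕ) : M :=
  (List.ofFn fun i => g i ^ a i).prod

@[simp]
lemma multiPow_zero (g : Fin n → M) : multiPow g 0 = 1 := by
  simp [multiPow]

lemma multiPow_succ (g : Fin (n + 1) → M) (a : Fin (n + 1) → ℕ) :
    multiPow g a = g 0 ^ a 0 * multiPow (Fin.tail g) (Fin.tail a) := by
  simp [multiPow, List.ofFn_succ, Fin.tail]

lemma Commute.multiPow_right {x : M} {g : Fin n → M} (h : ∀ i, Commute x (g i))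
    (a : Fin n → ℕ) : Commute x (multiPow g a) :=
  Commute.list_prod_right _ _ fun _ hy => by
    obtain ⟨i, rfl⟩ := List.mem_ofFn.1 hy
    exact (h i).pow_right _

lemma multiPow_add {g : Fin n → M} (hg : ∀ i j, Commute (g i) (g j)) (a b : Fin n → ℕ) :
    multiPow g (a + b) = multiPow g a * multiPow g b := by
  induction n with
  | zero => simp [multiPow]
  | succ n ih =>
    have hc : Commute (g 0 ^ b 0) (multiPow (Fin.tail g) (Fin.tail a)) :=
      Commute.multiPow_right (fun i => (hg 0 i.succ).pow_left _) _
    rw [multiPow_succ, multiPow_succ g a, multiPow_succ g b, Pi.add_apply, pow_add,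
      show Fin.tail (a + b) = Fin.tail a + Fin.tail b from rfl,
      ih (g := Fin.tail g) fun i j => hg i.succ j.succ, mul_assoc, ← mul_assoc (g 0 ^ b 0), hc.eq]
    simp only [mul_assoc]

lemma multiPow_single (g : Fin n → M) (i : Fin n) (k : ℕ) :
    multiPow g (Pi.single i k) = g i ^ k := by
  induction n with
  | zero => exact i.elim0
  | succ n ih =>
    rw [multiPow_succ]
    cases i using Fin.cases with
    | zero =>
      have : Fin.tail (Pi.single 0 k : Fin (n + 1) → ℕ) = 0 := by
        ext j; simp [Fin.tail]
      simp [this]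
    | succ i =>
      have : Fin.tail (Pi.single i.succ k : Fin (n + 1) → ℕ) = Pi.single i k := by
        ext j; simp [Fin.tail, Pi.single_apply]
      simp [this, ih, Fin.tail]

lemma map_multiPow {N F : Type*} [Monoid N] [FunLike F M N] [MonoidHomClass F M N] (f : F)
    (g : Fin n → M) (a : Fin n → ℕ) : f (multiPow g a) = multiPow (f ∘ g) a := by
  simp [multiPow, map_list_prod, List.map_ofFn, Function.comp_def]

lemma multiPow_mem {S : Type*} [SetLike S M] [SubmonoidClass S M] {s : S} {g : Fin n → M}
    (h : ∀ i, g i ∈ s) (a : Fin n → ℕ) : multiPow g a ∈ s :=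
  list_prod_mem fun _ hy => by
    obtain ⟨i, rfl⟩ := List.mem_ofFn.1 hy
    exact pow_mem (h i) _

end MultiPow

theorem MvPolynomial.pderiv_pderiv_comm {R σ : Type*} [CommSemiring R] (i j : σ)
    (p : MvPolynomial σ R) : pderiv i (pderiv j p) = pderiv j (pderiv i p) := by
  classical
  induction p using MvPolynomial.induction_on with
  | C a => simp
  | add p q hp hq => simp [hp, hq]
  | mul_X p k hp =>
    simp only [pderiv_mul, pderiv_X, map_add, hp, Pi.single_apply]
    split_ifs <;> simp [add_right_comm]

section Operators

variable (K : Type) [Field K] {n : ℕ}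

lemma commute_Xop_Xop (i j : Fin n) : Commute (Xop K i) (Xop K j) := by
  ext p
  simp [Xop, mul_left_comm]

lemma commute_Dop_Dop (i j : Fin n) : Commute (Dop K i) (Dop K j) :=
  LinearMap.ext (pderiv_pderiv_comm i j)

lemma Dop_mul_Xop_self (i : Fin n) : Dop K i * Xop K i = Xop K i * Dop K i + 1 := by
  ext p
  simp [Dop, Xop]

lemma commute_Dop_Xop {i j : Fin n} (h : i ≠ j) : Commute (Dop K i) (Xop K j) := by
  ext p
  simp [Dop, Xop, pderiv_X_of_ne h.symm]

lemma commute_thetaOp_thetaOp (i j : Fin n) : Commute (thetaOp K i) (thetaOp K j) := by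
  rcases eq_or_ne i j with rfl | h
  · rfl
  · exact ((commute_Xop_Xop K i j).mul_right (commute_Dop_Xop K h.symm).symm).mul_left
      ((commute_Dop_Xop K h).mul_right (commute_Dop_Dop K i j))

lemma Dop_mul_thetaOp_self (i : Fin n) :
    Dop K i * thetaOp K i = (thetaOp K i + 1) * Dop K i := by
  rw [thetaOp, ← mul_assoc, Dop_mul_Xop_self, add_mul, one_mul]

lemma commute_Dop_thetaOp {i j : Fin n} (h : i ≠ j) : Commute (Dop K i) (thetaOp K j) :=
  (commute_Dop_Xop K h).mul_right (commute_Dop_Dop K i j)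

end Operators

section Coefficients

variable (K : Type) [Field K] {n : ℕ}

lemma Tpow_eq_multiPow (a : Fin n → ℕ) : Tpow K a = multiPow (thetaOp K) a := rfl

lemma Dpow_eq_multiPow (b : Fin n → ℕ) : Dpow K b = multiPow (Dop K) b := rfl

lemma coeff_thetaOp (i : Fin n) (m : Fin n →₀ ℕ) (F : MvPolynomial (Fin n) K) :
    coeff m (thetaOp K i F) = m i * coeff m F := by
  classical
  rcases eq_or_ne (m i) 0 with hi | hi
  · simp [thetaOp, Xop, coeff_X_mul', hi]
  · obtain ⟨m, rfl⟩ : ∃ m', m = Finsupp.single i 1 + m' := ⟨m - Finsupp.single i 1,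
      (add_tsub_cancel_of_le (Finsupp.single_le_iff.2 (Nat.one_le_iff_ne_zero.2 hi))).symm⟩
    rw [thetaOp, Module.End.mul_apply, Xop, LinearMap.mulLeft_apply, coeff_X_mul, Dop,
      Derivation.coeFn_coe, coeff_pderiv, add_comm m]
    simp [add_comm, mul_comm]

lemma coeff_thetaOp_pow (i : Fin n) (k : ℕ) (m : Fin n →₀ ℕ) (F : MvPolynomial (Fin n) K) :
    coeff m ((thetaOp K i ^ k) F) = (m i : K) ^ k * coeff m F := by
  induction k with
  | zero => simp
  | succ k ih => rw [pow_succ', Module.End.mul_apply, coeff_thetaOp, ih, pow_succ', mul_assoc]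

lemma coeff_Tpow (a : Fin n → ℕ) (m : Fin n →₀ ℕ) (F : MvPolynomial (Fin n) K) :
    coeff m (Tpow K a F) = (∏ i, (m i : K) ^ a i) * coeff m F := by
  induction a using Pi.single_induction generalizing F with
  | zero => simp [Tpow_eq_multiPow]
  | add f g hf hg =>
    rw [Tpow_eq_multiPow, multiPow_add (commute_thetaOp_thetaOp K), Module.End.mul_apply,
      ← Tpow_eq_multiPow, ← Tpow_eq_multiPow, hf, hg]
    simp only [Pi.add_apply, pow_add, Finset.prod_mul_distrib]
    ring
  | single i k =>
    rw [Tpow_eq_multiPow, multiPow_single, coeff_thetaOp_pow,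
      Fintype.prod_eq_single i fun j hj => by simp [Pi.single_eq_of_ne hj], Pi.single_eq_same]

lemma coeff_Dop_pow (i : Fin n) (k : ℕ) (m : Fin n →₀ ℕ) (F : MvPolynomial (Fin n) K) :
    coeff m ((Dop K i ^ k) F) =
      (m i + 1).ascFactorial k * coeff (m + Finsupp.single i k) F := by
  induction k generalizing F with
  | zero => simp
  | succ k ih =>
    rw [pow_succ, Module.End.mul_apply, ih, Dop, Derivation.coeFn_coe, coeff_pderiv,
      Nat.ascFactorial_succ, Finsupp.single_add, add_assoc]
    simp only [Finsupp.add_apply, Finsupp.single_eq_same]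
    push_cast
    ring

lemma coeff_Dpow (b : Fin n →₀ ℕ) (m : Fin n →₀ ℕ) (F : MvPolynomial (Fin n) K) :
    coeff m (Dpow K b F) = (∏ i, ((m i + 1).ascFactorial (b i) : K)) * coeff (m + b) F := by
  induction b using Finsupp.induction_linear generalizing m F with
  | zero => simp [Dpow_eq_multiPow]
  | add f g hf hg =>
    rw [Finsupp.coe_add, Dpow_eq_multiPow, multiPow_add (commute_Dop_Dop K), Module.End.mul_apply,
      ← Dpow_eq_multiPow, ← Dpow_eq_multiPow, hf, hg, ← mul_assoc, ← add_assoc,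
      ← Finset.prod_mul_distrib]
    congr 2 with i
    simp only [Finsupp.add_apply, Pi.add_apply, ← Nat.cast_mul, add_right_comm _ (f i),
      Nat.ascFactorial_mul_ascFactorial]
  | single i k =>
    rw [Finsupp.single_eq_pi_single, Dpow_eq_multiPow, multiPow_single, coeff_Dop_pow,
      Fintype.prod_eq_single i fun j hj => by simp [Pi.single_eq_of_ne hj], Pi.single_eq_same]

end Coefficients

section LinearIndependence

variable (K : Type) [Field K] {n : ℕ}

lemma linearIndependent_natPowProd [CharZero K] :
    LinearIndependent K (fun (a : Fin n → ℕ) (m : Fin n →₀ ℕ) => ∏ i, (m i : K) ^ a i) := by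
  let evalNat : MvPolynomial (Fin n) K →ₗ[K] (Fin n →₀ ℕ) → K :=
    LinearMap.pi fun m => (aeval fun i => (m i : K)).toLinearMap
  have hinj : Function.Injective evalNat := by
    refine (injective_iff_map_eq_zero _).2 fun p hp => funext_set (fun _ => Set.range Nat.cast)
      (fun _ => Set.infinite_range_of_injective Nat.cast_injective) fun x hx => ?_
    choose k hk using fun i => hx i (Set.mem_univ i)
    have hx' : x = fun i => ((Finsupp.equivFunOnFinite.symm k) i : K) := funext fun i => (hk i).symm
    simpa [hx', evalNat] using congrFun hp (Finsupp.equivFunOnFinite.symm k)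
  have hmon : LinearIndependent K
      fun a : Fin n → ℕ => monomial (Finsupp.equivFunOnFinite.symm a) (1 : K) :=
    (basisMonomials (Fin n) K).linearIndependent.comp _ Finsupp.equivFunOnFinite.symm.injective
  have heval : (evalNat ∘ fun a => monomial (Finsupp.equivFunOnFinite.symm a) (1 : K)) =
      fun a m => ∏ i, (m i : K) ^ a i := by
    ext a m
    simp [evalNat, aeval_monomial, Finsupp.prod_fintype]
  exact heval ▸ hmon.map' evalNat (LinearMap.ker_eq_bot.2 hinj)

noncomputable def shiftCoeff :
    Module.End K (MvPolynomial (Fin n) K) →ₗ[K] (Fin n → ℕ) → (Fin n →₀ ℕ) → K where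
  toFun F b m := coeff m (F (monomial (m + Finsupp.equivFunOnFinite.symm b) 1)) /
    ∏ i, ((m i + 1).ascFactorial (b i) : K)
  map_add' F G := by ext; simp [add_div]
  map_smul' c F := by ext; simp [mul_div_assoc]

lemma shiftCoeff_Tpow_mul_Dpow [CharZero K] (a b : Fin n → ℕ) :
    shiftCoeff K (Tpow K a * Dpow K b) = Pi.single b fun m => ∏ i, (m i : K) ^ a i := by
  ext b₀ m
  have hc : ∏ i, ((m i + 1).ascFactorial (b₀ i) : K) ≠ 0 :=
    Finset.prod_ne_zero_iff.2 fun i _ => Nat.cast_ne_zero.2 (Nat.ascFactorial_pos _ _).ne'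
  simp only [shiftCoeff, LinearMap.coe_mk, AddHom.coe_mk, Module.End.mul_apply, coeff_Tpow]
  rw [show Dpow K b = Dpow K (Finsupp.equivFunOnFinite.symm b) from rfl, coeff_Dpow, coeff_monomial]
  by_cases h : b = b₀
  · subst h
    simp [hc]
  · rw [if_neg (by simpa using Ne.symm h), Pi.single_eq_of_ne' h]
    simp

theorem linearIndependent_Tpow_mul_Dpow [CharZero K] :
    LinearIndependent K fun p : (Fin n → ℕ) × (Fin n → ℕ) => Tpow K p.1 * Dpow K p.2 := by
  refine LinearIndependent.of_comp (shiftCoeff K) ?_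
  have hsingle := Pi.linearIndependent_single (R := K) (η := Fin n → ℕ) (ιs := fun _ => Fin n → ℕ)
    (Ms := fun _ => (Fin n →₀ ℕ) → K) (fun _ a m => ∏ i, (m i : K) ^ a i)
    fun _ => linearIndependent_natPowProd K
  have hcomp : (shiftCoeff K ∘ fun p : (Fin n → ℕ) × (Fin n → ℕ) => Tpow K p.1 * Dpow K p.2) =
      (fun ba : Σ _ : Fin n → ℕ, Fin n → ℕ => Pi.single ba.1 fun m : Fin n →₀ ℕ =>
        ∏ i, (m i : K) ^ ba.2 i) ∘ fun p => ⟨p.2, p.1⟩ :=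
    funext fun p => shiftCoeff_Tpow_mul_Dpow K p.1 p.2
  rw [hcomp]
  exact hsingle.comp _ fun p q h => Prod.ext (Sigma.mk.inj h).2.eq (Sigma.mk.inj h).1

end LinearIndependence

lemma mul_mem_span_of_forall_mul_mem {R A : Type*} [CommSemiring R] [Semiring A] [Algebra R A]
    {T : Set A} {g : A} (h : ∀ u ∈ T, g * u ∈ Submodule.span R T) {u : A}
    (hu : u ∈ Submodule.span R T) : g * u ∈ Submodule.span R T :=
  Submodule.span_le (p := (Submodule.span R T).comap (LinearMap.mulLeft R g)).2 h hu

lemma mul_mem_of_mem_adjoin {R A : Type*} [CommSemiring R] [Semiring A] [Algebra R A]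
    {T : Set A} {N : Submodule R A} (h : ∀ g ∈ T, ∀ u ∈ N, g * u ∈ N) {v : A}
    (hv : v ∈ Algebra.adjoin R T) {u : A} (hu : u ∈ N) : v * u ∈ N := by
  induction hv using Algebra.adjoin_induction generalizing u with
  | mem g hg => exact h g hg u hu
  | algebraMap r => simpa [Algebra.smul_def] using N.smul_mem r hu
  | add v w _ _ hv hw => simpa [add_mul] using N.add_mem (hv hu) (hw hu)
  | mul v w _ _ hv hw => simpa [mul_assoc] using hv (hw hu)

namespace ShiftAlg

variable (K : Type) [Field K] {n : ℕ}

noncomputable abbrev gen (z : Fin n ⊕ Fin n) : ShiftAlg K n :=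
  RingQuot.mkAlgHom K (ShiftRel K n) (FreeAlgebra.ι K z)

noncomputable abbrev x (i : Fin n) : ShiftAlg K n := gen K (.inl i)

noncomputable abbrev s (i : Fin n) : ShiftAlg K n := gen K (.inr i)

lemma commute_x_x (i j : Fin n) : Commute (x K i) (x K j) :=
  (map_mul _ _ _).symm.trans <| (RingQuot.mkAlgHom_rel K (ShiftRel.xx i j)).trans (map_mul _ _ _)

lemma commute_s_s (i j : Fin n) : Commute (s K i) (s K j) :=
  (map_mul _ _ _).symm.trans <| (RingQuot.mkAlgHom_rel K (ShiftRel.ss i j)).trans (map_mul _ _ _)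

lemma commute_s_x {i j : Fin n} (h : i ≠ j) : Commute (s K i) (x K j) :=
  (map_mul _ _ _).symm.trans <| (RingQuot.mkAlgHom_rel K (ShiftRel.sx i j h)).trans (map_mul _ _ _)

lemma s_mul_x_self (i : Fin n) : s K i * x K i = (x K i + 1) * s K i := by
  simpa only [map_mul, map_add, map_one] using RingQuot.mkAlgHom_rel K (ShiftRel.shift (K := K) i)

lemma adjoin_range_gen : Algebra.adjoin K (Set.range (gen K (n := n))) = ⊤ := by
  rw [Algebra.adjoin_range_eq_range_freeAlgebra_lift, AlgHom.range_eq_top]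
  convert RingQuot.mkAlgHom_surjective K (ShiftRel K n)
  ext
  simp

lemma exists_s_mul_eq_mul_s (i : Fin n) {u : ShiftAlg K n}
    (hu : u ∈ Algebra.adjoin K (Set.range (x K))) :
    ∃ v ∈ Algebra.adjoin K (Set.range (x K)), s K i * u = v * s K i := by
  induction hu using Algebra.adjoin_induction with
  | mem u hu =>
    obtain ⟨j, rfl⟩ := hu
    rcases eq_or_ne i j with rfl | h
    · exact ⟨x K i + 1, add_mem (Algebra.subset_adjoin ⟨i, rfl⟩) (one_mem _), s_mul_x_self K i⟩
    · exact ⟨x K j, Algebra.subset_adjoin ⟨j, rfl⟩, commute_s_x K h⟩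
  | algebraMap r =>
    exact ⟨algebraMap K _ r, Subalgebra.algebraMap_mem _ r, (Algebra.commutes r _).symm⟩
  | add u w _ _ hu hw =>
    obtain ⟨v, hv, huv⟩ := hu
    obtain ⟨v', hv', hwv⟩ := hw
    exact ⟨v + v', add_mem hv hv', by rw [mul_add, huv, hwv, add_mul]⟩
  | mul u w _ _ hu hw =>
    obtain ⟨v, hv, huv⟩ := hu
    obtain ⟨v', hv', hwv⟩ := hw
    exact ⟨v * v', mul_mem hv hv', by rw [← mul_assoc, huv, mul_assoc, hwv, mul_assoc]⟩

theorem span_multiPow_mul_multiPow :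
    Submodule.span K (Set.range fun p : (Fin n → ℕ) × (Fin n → ℕ) =>
      multiPow (x K) p.1 * multiPow (s K) p.2) = ⊤ := by
  set L := Submodule.span K (Set.range fun p : (Fin n → ℕ) × (Fin n → ℕ) =>
      multiPow (x K) p.1 * multiPow (s K) p.2)
  have hmem (a b : Fin n → ℕ) : multiPow (x K) a * multiPow (s K) b ∈ L :=
    Submodule.subset_span ⟨(a, b), rfl⟩
  have hx (i : Fin n) {u : ShiftAlg K n} (hu : u ∈ L) : x K i * u ∈ L := by
    refine mul_mem_span_of_forall_mul_mem ?_ hu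
    rintro _ ⟨⟨a, b⟩, rfl⟩
    rw [← mul_assoc, ← pow_one (x K i), ← multiPow_single, ← multiPow_add (commute_x_x K)]
    exact hmem _ _
  have hs (i : Fin n) {u : ShiftAlg K n} (hu : u ∈ L) : s K i * u ∈ L := by
    refine mul_mem_span_of_forall_mul_mem ?_ hu
    rintro _ ⟨⟨a, b⟩, rfl⟩
    obtain ⟨v, hv, hsv⟩ := exists_s_mul_eq_mul_s K i
      (multiPow_mem (fun j => Algebra.subset_adjoin (Set.mem_range_self j)) a)
    rw [← mul_assoc, hsv, mul_assoc, ← pow_one (s K i), ← multiPow_single,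
      ← multiPow_add (commute_s_s K)]
    refine mul_mem_of_mem_adjoin ?_ hv (by simpa using hmem 0 (Pi.single i 1 + b))
    rintro _ ⟨j, rfl⟩ _ hu
    exact hx j hu
  refine eq_top_iff.2 fun u _ => ?_
  have hu : u ∈ Algebra.adjoin K (Set.range (gen K)) := adjoin_range_gen K ▸ Algebra.mem_top
  simpa using mul_mem_of_mem_adjoin (N := L) (u := 1) (by
    rintro _ ⟨i | i, rfl⟩ _ hu
    exacts [hx i hu, hs i hu]) hu (by simpa using hmem 0 0)

noncomputable def toEnd : ShiftAlg K n →ₐ[K] Module.End K (MvPolynomial (Fin n) K) :=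
  RingQuot.liftAlgHom K ⟨FreeAlgebra.lift K (Sum.elim (thetaOp K) (Dop K)), fun _ _ h => by
    cases h with
    | xx i j => simpa using (commute_thetaOp_thetaOp K i j).eq
    | ss i j => simpa using (commute_Dop_Dop K i j).eq
    | sx i j h => simpa using (commute_Dop_thetaOp K h).eq
    | shift i => simpa using Dop_mul_thetaOp_self K i⟩

@[simp]
lemma toEnd_x (i : Fin n) : toEnd K (x K i) = thetaOp K i := by
  simp [toEnd]

@[simp]
lemma toEnd_s (i : Fin n) : toEnd K (s K i) = Dop K i := by
  simp [toEnd]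

lemma toEnd_multiPow_mul_multiPow (a b : Fin n → ℕ) :
    toEnd K (multiPow (x K) a * multiPow (s K) b) = Tpow K a * Dpow K b := by
  simp only [map_mul, map_multiPow, Function.comp_def, toEnd_x, toEnd_s]
  rfl

theorem toEnd_injective [CharZero K] : Function.Injective (toEnd K (n := n)) :=
  LinearMap.injective_of_linearIndependent (f := (toEnd K).toLinearMap)
    (span_multiPow_mul_multiPow K) <| by
      simpa only [Function.comp_def, AlgHom.toLinearMap_apply, toEnd_multiPow_mul_multiPow]
        using linearIndependent_Tpow_mul_Dpow K

theorem toEnd_mem_weylAlg (u : ShiftAlg K n) : toEnd K u ∈ WeylAlg K n := by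
  have hu : toEnd K u ∈ (Algebra.adjoin K (Set.range (gen K))).map (toEnd K) :=
    ⟨u, adjoin_range_gen K ▸ Algebra.mem_top, rfl⟩
  rw [AlgHom.map_adjoin] at hu
  refine Algebra.adjoin_le ?_ hu
  rintro _ ⟨_, ⟨i | i, rfl⟩, rfl⟩
  · change toEnd K (x K i) ∈ WeylAlg K n
    rw [toEnd_x]
    exact mul_mem (Algebra.subset_adjoin (Set.mem_union_left _ (Set.mem_range_self i)))
      (Algebra.subset_adjoin (Set.mem_union_right _ (Set.mem_range_self i)))
  · change toEnd K (s K i) ∈ WeylAlg K n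
    rw [toEnd_s]
    exact Algebra.subset_adjoin (Set.mem_union_right _ (Set.mem_range_self i))

end ShiftAlg

theorem shift_algebra_embeds_in_weyl_general (K : Type) [Field K] [CharZero K]
    (n : ℕ) :
    (∀ i : Fin n, Dop K i * thetaOp K i = (thetaOp K i + 1) * Dop K i) ∧
    (∀ i j : Fin n, i ≠ j → Dop K i * thetaOp K j = thetaOp K j * Dop K i) ∧
    (∀ i j : Fin n, thetaOp K i * thetaOp K j = thetaOp K j * thetaOp K i) ∧
    (∀ i j : Fin n, Dop K i * Dop K j = Dop K j * Dop K i) ∧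
    LinearIndependent K
      (fun p : (Fin n → ℕ) × (Fin n → ℕ) => Tpow K p.1 * Dpow K p.2) ∧
    ∃ φ : ShiftAlg K n →ₐ[K] Module.End K (MvPolynomial (Fin n) K),
      Function.Injective φ ∧
      (∀ a : ShiftAlg K n, φ a ∈ WeylAlg K n) ∧
      (∀ i : Fin n,
        φ (RingQuot.mkAlgHom K (ShiftRel K n) (FreeAlgebra.ι K (Sum.inl i)))
          = thetaOp K i) ∧
      (∀ i : Fin n,
        φ (RingQuot.mkAlgHom K (ShiftRel K n) (FreeAlgebra.ι K (Sum.inr i)))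
          = Dop K i) :=
  ⟨Dop_mul_thetaOp_self K, fun _ _ h => commute_Dop_thetaOp K h, commute_thetaOp_thetaOp K,
    commute_Dop_Dop K, linearIndependent_Tpow_mul_Dpow K, ShiftAlg.toEnd K,
    ShiftAlg.toEnd_injective K, ShiftAlg.toEnd_mem_weylAlg K, ShiftAlg.toEnd_x K,
    ShiftAlg.toEnd_s K⟩

/-- The operators `θ_i := X_i ∘ D_i` and `D_j` satisfy the defining
relations of the `n`-th shift algebra, the family `{θ^a ∘ D^b}` is linearly independent
over `K`, and consequently `x_i ↦ θ_i`, `s_i ↦ D_i` realizes the `n`-th shift algebra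
as a `K`-subalgebra of the `n`-th Weyl algebra `A_n` via an injective `K`-algebra
homomorphism. -/
theorem shift_algebra_embeds_in_weyl (K : Type) [Field K] [CharZero K]
    (n : ℕ) (hn : 0 < n) :
    (∀ i : Fin n, Dop K i * thetaOp K i = (thetaOp K i + 1) * Dop K i) ∧
    (∀ i j : Fin n, i ≠ j → Dop K i * thetaOp K j = thetaOp K j * Dop K i) ∧
    (∀ i j : Fin n, thetaOp K i * thetaOp K j = thetaOp K j * thetaOp K i) ∧
    (∀ i j : Fin n, Dop K i * Dop K j = Dop K j * Dop K i) ∧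
    LinearIndependent K
      (fun p : (Fin n → ℕ) × (Fin n → ℕ) => Tpow K p.1 * Dpow K p.2) ∧
    ∃ φ : ShiftAlg K n →ₐ[K] Module.End K (MvPolynomial (Fin n) K),
      Function.Injective φ ∧
      (∀ a : ShiftAlg K n, φ a ∈ WeylAlg K n) ∧
      (∀ i : Fin n,
        φ (RingQuot.mkAlgHom K (ShiftRel K n) (FreeAlgebra.ι K (Sum.inl i)))
          = thetaOp K i) ∧
      (∀ i : Fin n,
        φ (RingQuot.mkAlgHom K (ShiftRel K n) (FreeAlgebra.ι K (Sum.inr i)))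
          = Dop K i) :=
  shift_algebra_embeds_in_weyl_general K n
end
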